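/- arXiv:1805.01404 — 6 statements merged into one kernel-verified Lean document; each statement's English description precedes it below -/
import Mathlib

section
/- Let n > 2 and 0 ≤ m < 2. Then ∫₀^∞ (1 - (w/(1+w))^(n/2-1)) w^(-m/2) dw = Γ(m/2) Γ((n-m)/2) / ((1 - m/2) Γ(n/2 - 1)), where for m = 0 the right side is interpreted via the limit; in particular the integral is finite for 0 < m < 2. -/
/-!
With `a = n/2 - 1` and `s = m/2`, integrate by parts against `w ^ (1 - s) / (1 - s)`: since
`d/dw (w/(1+w))^a = a w^(a-1) (1+w)^(-(a+1))`, the integral becomes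
`a/(1-s) ∫₀^∞ w^(a-s) (1+w)^(-(a+1)) dw = a/(1-s) · B(a+1-s, s)`, and `Γ(a+1) = a Γ(a)` gives the
closed form. The boundary terms vanish and the integrand is integrable because
`1 - (w/(1+w))^a ≤ max a 1 / (1+w)`. The beta integral over `(0, ∞)` is reduced to Mathlib's
beta integral over `(0, 1)` by the substitution `w = x / (1 - x)`.
-/

open MeasureTheory Real Set Filter

lemma ofReal_rpow_mul_one_sub_rpow {x : ℝ} (hx : x ∈ Icc (0 : ℝ) 1) (p q : ℝ) :
    ((x ^ (p - 1) * (1 - x) ^ (q - 1) : ℝ) : ℂ) =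
      (x : ℂ) ^ ((p : ℂ) - 1) * (1 - (x : ℂ)) ^ ((q : ℂ) - 1) := by
  rw [Complex.ofReal_mul, Complex.ofReal_cpow hx.1, Complex.ofReal_cpow (sub_nonneg.2 hx.2)]
  push_cast
  rfl

lemma hasDerivAt_div_one_sub {x : ℝ} (hx : x ≠ 1) :
    HasDerivAt (fun x : ℝ => x / (1 - x)) ((1 - x) ^ 2)⁻¹ x := by
  have hx' : 1 - x ≠ 0 := sub_ne_zero.2 hx.symm
  refine ((hasDerivAt_id' x).div ((hasDerivAt_id' x).const_sub 1) hx').congr_deriv ?_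
  field_simp
  ring

lemma injOn_div_one_sub : InjOn (fun x : ℝ => x / (1 - x)) (Ioo 0 1) := by
  intro x hx y hy h
  rw [div_eq_div_iff (by linarith [hx.2]) (by linarith [hy.2])] at h
  linarith

lemma image_div_one_sub_Ioo : (fun x : ℝ => x / (1 - x)) '' Ioo 0 1 = Ioi 0 := by
  refine Subset.antisymm ?_ fun t (ht : 0 < t) => ⟨t / (1 + t), ?_, ?_⟩
  · rintro _ ⟨x, hx, rfl⟩
    exact div_pos hx.1 (by linarith [hx.2])
  · exact ⟨by positivity, (div_lt_one (by positivity)).2 (by linarith)⟩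
  · field_simp
    ring

section Substitution

variable {E : Type*} [NormedAddCommGroup E] [NormedSpace ℝ E] (g : ℝ → E)

lemma integrableOn_Ioi_iff_integrableOn_Ioo_comp_div_one_sub :
    IntegrableOn g (Ioi 0) ↔
      IntegrableOn (fun x => ((1 - x) ^ 2)⁻¹ • g (x / (1 - x))) (Ioo 0 1) := by
  rw [← image_div_one_sub_Ioo, integrableOn_image_iff_integrableOn_abs_deriv_smul
    measurableSet_Ioo (fun x hx => (hasDerivAt_div_one_sub hx.2.ne).hasDerivWithinAt)
    injOn_div_one_sub]
  refine integrableOn_congr_fun (fun x hx => ?_) measurableSet_Ioo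
  rw [abs_of_nonneg (by positivity)]

lemma integral_Ioi_eq_integral_Ioo_comp_div_one_sub :
    ∫ t in Ioi 0, g t = ∫ x in Ioo 0 1, ((1 - x) ^ 2)⁻¹ • g (x / (1 - x)) := by
  rw [← image_div_one_sub_Ioo, integral_image_eq_integral_abs_deriv_smul
    measurableSet_Ioo (fun x hx => (hasDerivAt_div_one_sub hx.2.ne).hasDerivWithinAt)
    injOn_div_one_sub]
  refine setIntegral_congr_fun measurableSet_Ioo (fun x hx => ?_)
  rw [abs_of_nonneg (by positivity)]

end Substitution

section Beta

variable {p q : ℝ}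

lemma integrableOn_rpow_mul_one_sub_rpow (hp : 0 < p) (hq : 0 < q) :
    IntegrableOn (fun x : ℝ => x ^ (p - 1) * (1 - x) ^ (q - 1)) (Ioo 0 1) := by
  have h : IntegrableOn _ (Ioc (0 : ℝ) 1) :=
    (Complex.betaIntegral_convergent (u := p) (v := q) (by simpa) (by simpa)).1
  refine (IntegrableOn.mono_set h.re Ioo_subset_Ioc_self).congr_fun (fun x hx => ?_)
    measurableSet_Ioo
  simp only [RCLike.re_to_complex, ← ofReal_rpow_mul_one_sub_rpow (Ioo_subset_Icc_self hx),
    Complex.ofReal_re]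

lemma integral_rpow_mul_one_sub_rpow (hp : 0 < p) (hq : 0 < q) :
    ∫ x in Ioo (0 : ℝ) 1, x ^ (p - 1) * (1 - x) ^ (q - 1) =
      Gamma p * Gamma q / Gamma (p + q) := by
  have h := Complex.betaIntegral_eq_Gamma_mul_div p q (by simpa) (by simpa)
  rw [Complex.betaIntegral, ← intervalIntegral.integral_congr (fun x hx =>
      ofReal_rpow_mul_one_sub_rpow (uIcc_of_le (zero_le_one' ℝ) ▸ hx) p q),
    intervalIntegral.integral_ofReal, ← Complex.ofReal_add, Complex.Gamma_ofReal,
    Complex.Gamma_ofReal, Complex.Gamma_ofReal] at h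
  rw [← integral_Ioc_eq_integral_Ioo, ← intervalIntegral.integral_of_le zero_le_one]
  exact_mod_cast h

lemma inv_one_sub_sq_mul_rpow_mul_one_add_rpow {x : ℝ} (hx : x ∈ Ioo (0 : ℝ) 1) :
    ((1 - x) ^ 2)⁻¹ * ((x / (1 - x)) ^ (p - 1) * (1 + x / (1 - x)) ^ (-(p + q))) =
      x ^ (p - 1) * (1 - x) ^ (q - 1) := by
  have hx1 : 0 < 1 - x := by linarith [hx.2]
  have h1 : 1 + x / (1 - x) = (1 - x)⁻¹ := by field_simp; ring
  rw [h1, div_rpow hx.1.le hx1.le, inv_rpow hx1.le, rpow_neg hx1.le, inv_inv]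
  have h2 : (1 - x) ^ (p + q) = (1 - x) ^ (p - 1) * (1 - x) ^ (q - 1) * (1 - x) ^ 2 := by
    rw [← rpow_add hx1, ← rpow_two, ← rpow_add hx1]
    ring_nf
  have h3 : 0 < (1 - x) ^ (p - 1) := rpow_pos_of_pos hx1 _
  rw [h2]
  field_simp

lemma integrableOn_rpow_mul_one_add_rpow (hp : 0 < p) (hq : 0 < q) :
    IntegrableOn (fun t : ℝ => t ^ (p - 1) * (1 + t) ^ (-(p + q))) (Ioi 0) := by
  rw [integrableOn_Ioi_iff_integrableOn_Ioo_comp_div_one_sub]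
  exact (integrableOn_rpow_mul_one_sub_rpow hp hq).congr_fun
    (fun x hx => (inv_one_sub_sq_mul_rpow_mul_one_add_rpow hx).symm) measurableSet_Ioo

lemma integral_rpow_mul_one_add_rpow (hp : 0 < p) (hq : 0 < q) :
    ∫ t in Ioi (0 : ℝ), t ^ (p - 1) * (1 + t) ^ (-(p + q)) =
      Gamma p * Gamma q / Gamma (p + q) := by
  rw [integral_Ioi_eq_integral_Ioo_comp_div_one_sub, ← integral_rpow_mul_one_sub_rpow hp hq]
  exact setIntegral_congr_fun measurableSet_Ioo fun x hx =>
    inv_one_sub_sq_mul_rpow_mul_one_add_rpow hx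

end Beta

lemma one_sub_rpow_le_max_mul_one_sub {x a : ℝ} (hx0 : 0 ≤ x) (hx1 : x ≤ 1) (ha : 0 < a) :
    1 - x ^ a ≤ max a 1 * (1 - x) := by
  rcases le_or_gt a 1 with ha1 | ha1
  · have hx : x ≤ x ^ a := by
      simpa using rpow_le_rpow_of_exponent_ge' hx0 hx1 ha.le ha1
    rw [max_eq_right ha1]
    linarith
  · have hb := one_add_mul_self_le_rpow_one_add (s := x - 1) (by linarith) ha1.le
    rw [add_sub_cancel] at hb
    rw [max_eq_left ha1.le]
    linarith

section Integrand

variable {a s w : ℝ}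

lemma div_one_add_le_one (hw : 0 ≤ w) : w / (1 + w) ≤ 1 :=
  (div_le_one (by positivity)).2 (by linarith)

lemma one_sub_div_one_add_rpow_nonneg (hw : 0 ≤ w) (ha : 0 ≤ a) :
    0 ≤ 1 - (w / (1 + w)) ^ a :=
  sub_nonneg.2 (rpow_le_one (by positivity) (div_one_add_le_one hw) ha)

lemma one_sub_div_one_add_rpow_le (hw : 0 ≤ w) (ha : 0 < a) :
    1 - (w / (1 + w)) ^ a ≤ max a 1 / (1 + w) := by
  have h := one_sub_rpow_le_max_mul_one_sub (by positivity) (div_one_add_le_one hw) ha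
  rwa [show 1 - w / (1 + w) = 1 / (1 + w) by field_simp; ring, mul_one_div] at h

lemma integrableOn_one_sub_div_one_add_rpow_mul_rpow (ha : 0 < a) (hs0 : 0 < s) (hs1 : s < 1) :
    IntegrableOn (fun w : ℝ => (1 - (w / (1 + w)) ^ a) * w ^ (-s)) (Ioi 0) := by
  refine Integrable.mono' ((integrableOn_rpow_mul_one_add_rpow (p := 1 - s) (q := s)
    (by linarith) hs0).const_mul (max a 1)) (by fun_prop) ?_
  refine ae_restrict_of_forall_mem measurableSet_Ioi fun w (hw : 0 < w) => ?_
  have hws : 0 < w ^ (-s) := rpow_pos_of_pos hw _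
  rw [norm_of_nonneg (mul_nonneg (one_sub_div_one_add_rpow_nonneg hw.le ha.le) hws.le),
    show 1 - s - 1 = -s by ring, show -(1 - s + s) = (-1 : ℝ) by ring, rpow_neg_one]
  calc (1 - (w / (1 + w)) ^ a) * w ^ (-s) ≤ max a 1 / (1 + w) * w ^ (-s) :=
        mul_le_mul_of_nonneg_right (one_sub_div_one_add_rpow_le hw.le ha) hws.le
    _ = max a 1 * (w ^ (-s) * (1 + w)⁻¹) := by ring

lemma hasDerivAt_div_one_add_rpow (hw : 0 < w) :
    HasDerivAt (fun w : ℝ => (w / (1 + w)) ^ a) (a * w ^ (a - 1) * (1 + w) ^ (-(a + 1))) w := by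
  have hw1 : 0 < 1 + w := by linarith
  have hu : HasDerivAt (fun w : ℝ => w / (1 + w)) ((1 + w) ^ 2)⁻¹ w :=
    ((hasDerivAt_id' w).div ((hasDerivAt_id' w).const_add 1) hw1.ne').congr_deriv
      (by field_simp; ring)
  refine ((hasDerivAt_rpow_const (Or.inl (div_pos hw hw1).ne')).comp w hu).congr_deriv ?_
  rw [div_rpow hw.le hw1.le, rpow_neg hw1.le, show a + 1 = (a - 1) + 2 by ring,
    rpow_add hw1, rpow_two]
  have : 0 < (1 + w) ^ (a - 1) := rpow_pos_of_pos hw1 _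
  field_simp

/-- The second term of the derivative is written as the beta integrand with `p = a + 1 - s`,
`q = s`. -/
lemma hasDerivAt_one_sub_div_one_add_rpow_mul_rpow_div (hw : 0 < w) (hs : s ≠ 1) :
    HasDerivAt (fun w : ℝ => (1 - (w / (1 + w)) ^ a) * w ^ (1 - s) / (1 - s))
      ((1 - (w / (1 + w)) ^ a) * w ^ (-s) -
        a / (1 - s) * (w ^ ((a + 1 - s) - 1) * (1 + w) ^ (-((a + 1 - s) + s)))) w := by
  have hs' : 1 - s ≠ 0 := sub_ne_zero.2 hs.symm
  refine ((((hasDerivAt_div_one_add_rpow hw).const_sub 1).mul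
    (hasDerivAt_rpow_const (p := 1 - s) (Or.inl hw.ne'))).div_const (1 - s)).congr_deriv ?_
  rw [show 1 - s - 1 = -s by ring, show a + 1 - s - 1 = (a - 1) + (1 - s) by ring,
    show a + 1 - s + s = a + 1 by ring, rpow_add hw]
  field_simp
  ring

lemma continuousAt_one_sub_div_one_add_rpow_mul_rpow_div_zero (ha : 0 ≤ a) (hs : s < 1) :
    ContinuousAt (fun w : ℝ => (1 - (w / (1 + w)) ^ a) * w ^ (1 - s) / (1 - s)) 0 := by
  have hu : ContinuousAt (fun w : ℝ => w / (1 + w)) 0 :=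
    continuousAt_id.div (continuousAt_const.add continuousAt_id) (by norm_num)
  exact ((continuousAt_const.sub (hu.rpow_const (Or.inr ha))).mul
    (continuousAt_id.rpow_const (Or.inr (by linarith)))).div_const _

lemma tendsto_one_sub_div_one_add_rpow_mul_rpow_div_atTop (ha : 0 < a) (hs0 : 0 < s)
    (hs1 : s < 1) :
    Tendsto (fun w : ℝ => (1 - (w / (1 + w)) ^ a) * w ^ (1 - s) / (1 - s)) atTop (nhds 0) := by
  have hs : 0 < 1 - s := by linarith
  have hlim : Tendsto (fun w : ℝ => max a 1 / (1 - s) * w ^ (-s)) atTop (nhds 0) := by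
    simpa using (tendsto_rpow_neg_atTop hs0).const_mul (max a 1 / (1 - s))
  refine squeeze_zero' ?_ ?_ hlim
  · filter_upwards [eventually_gt_atTop 0] with w hw
    exact div_nonneg (mul_nonneg (one_sub_div_one_add_rpow_nonneg hw.le ha.le)
      (rpow_nonneg hw.le _)) hs.le
  · filter_upwards [eventually_gt_atTop 0] with w hw
    have hws : 0 < w ^ (-s) := rpow_pos_of_pos hw _
    rw [div_le_iff₀ hs, sub_eq_add_neg 1 s, rpow_add hw, rpow_one, ← sub_eq_add_neg]
    calc (1 - (w / (1 + w)) ^ a) * (w * w ^ (-s))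
        ≤ max a 1 / (1 + w) * (w * w ^ (-s)) :=
          mul_le_mul_of_nonneg_right (one_sub_div_one_add_rpow_le hw.le ha) (by positivity)
      _ = max a 1 * w ^ (-s) * (w / (1 + w)) := by ring
      _ ≤ max a 1 * w ^ (-s) := mul_le_of_le_one_right (by positivity) (div_one_add_le_one hw.le)
      _ = max a 1 / (1 - s) * w ^ (-s) * (1 - s) := by field_simp

theorem integral_one_sub_div_one_add_rpow_mul_rpow (ha : 0 < a) (hs0 : 0 < s) (hs1 : s < 1) :
    ∫ w in Ioi (0 : ℝ), (1 - (w / (1 + w)) ^ a) * w ^ (-s) =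
      Gamma s * Gamma (a + 1 - s) / ((1 - s) * Gamma a) := by
  have hp : 0 < a + 1 - s := by linarith
  have hf := integrableOn_one_sub_div_one_add_rpow_mul_rpow ha hs0 hs1
  have hg := (integrableOn_rpow_mul_one_add_rpow hp hs0).const_mul (a / (1 - s))
  have hftc := integral_Ioi_of_hasDerivAt_of_tendsto
    (continuousAt_one_sub_div_one_add_rpow_mul_rpow_div_zero ha.le hs1).continuousWithinAt
    (fun w hw => hasDerivAt_one_sub_div_one_add_rpow_mul_rpow_div hw hs1.ne)
    (hf.sub hg) (tendsto_one_sub_div_one_add_rpow_mul_rpow_div_atTop ha hs0 hs1)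
  rw [integral_sub hf hg, integral_const_mul, integral_rpow_mul_one_add_rpow hp hs0,
    zero_rpow (by linarith), show a + 1 - s + s = a + 1 by ring, Gamma_add_one ha.ne'] at hftc
  have hs : 1 - s ≠ 0 := by linarith
  have hG : Gamma a ≠ 0 := (Gamma_pos_of_pos ha).ne'
  rw [sub_eq_iff_eq_add.1 hftc]
  field_simp
  ring

end Integrand

theorem psi_zero_integral (n m : ℝ) (hn : 2 < n) (hm0 : 0 < m) (hm2 : m < 2) :
    IntegrableOn
        (fun w : ℝ => (1 - (w / (1 + w)) ^ (n / 2 - 1)) * w ^ (-m / 2)) (Set.Ioi 0) ∧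
      ∫ w in Set.Ioi (0:ℝ), (1 - (w / (1 + w)) ^ (n / 2 - 1)) * w ^ (-m / 2) =
        Real.Gamma (m / 2) * Real.Gamma ((n - m) / 2) /
          ((1 - m / 2) * Real.Gamma (n / 2 - 1)) := by
  have ha : 0 < n / 2 - 1 := by linarith
  have hs0 : 0 < m / 2 := by linarith
  have hs1 : m / 2 < 1 := by linarith
  rw [neg_div, show (n - m) / 2 = n / 2 - 1 + 1 - m / 2 by ring]
  exact ⟨integrableOn_one_sub_div_one_add_rpow_mul_rpow ha hs0 hs1,
    integral_one_sub_div_one_add_rpow_mul_rpow ha hs0 hs1⟩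
end

section
/- Let n > 2, 0 ≤ m < 2, and ψ(x) = (1/Γ((n-m)/2)) ∫₀^∞ (1 - (w/(1+w))^(n/2-1)) w^(-m/2) e^(-xw) dw. Define p(x) = -x^(1-m/2) ψ'(x) for x > 0. Then p is nonnegative and decreasing on (0,∞). -/
/-!
With `a = n/2 - 1 ≥ 0`, `ψ` is `1/Γ((n-m)/2)` times the Laplace transform of
`g(w) = (1 - (w/(1+w))^a) w^(-m/2)`. Differentiating under the integral and substituting
`v = x w` gives `Γ((n-m)/2) p(x) = ∫₀^∞ (1 - (v/(x+v))^a)/x · v^(1-m/2) e^(-v) dv`.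
For fixed `v`, `x ↦ (v/(x+v))^a` is convex on `[0, ∞)` and equals `1` at `0`, so
`(1 - (v/(x+v))^a)/x` is minus a secant slope from `0`: nonnegative and decreasing in `x`.
Integrating against `v^(1-m/2) e^(-v)` preserves both properties.
-/

open MeasureTheory Real Set

theorem convexOn_rpow_neg {a : ℝ} (ha : 0 ≤ a) :
    ConvexOn ℝ (Ioi 0) fun x : ℝ ↦ x ^ (-a) := by
  have hlog : ConvexOn ℝ (Ioi 0) fun x ↦ -(a • log x) :=
    (strictConcaveOn_log_Ioi.concaveOn.smul ha).neg
  have himage : Convex ℝ ((fun x ↦ -(a • log x)) '' Ioi 0) :=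
    (isPreconnected_Ioi.image _ (by fun_prop (disch := exact fun x hx ↦ ne_of_gt hx))).convex
  refine ((convexOn_exp.subset (subset_univ _) himage).comp hlog
    (exp_monotone.monotoneOn _)).congr fun x (hx : 0 < x) ↦ ?_
  simp [rpow_def_of_pos hx, mul_comm]

theorem convexOn_div_add_rpow {a v : ℝ} (ha : 0 ≤ a) (hv : 0 < v) :
    ConvexOn ℝ (Ici 0) fun x : ℝ ↦ (v / (x + v)) ^ a := by
  have h := ((convexOn_rpow_neg ha).translate_right v).subset
    (fun x (hx : 0 ≤ x) ↦ show 0 < v + x by linarith) (convex_Ici 0)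
  refine (h.smul (rpow_nonneg hv.le a)).congr fun x (hx : 0 ≤ x) ↦ ?_
  simp only [Function.comp, smul_eq_mul]
  rw [div_rpow hv.le (by linarith), rpow_neg (by linarith), div_eq_mul_inv, add_comm]

theorem antitoneOn_one_sub_div_add_rpow_div {a v : ℝ} (ha : 0 ≤ a) (hv : 0 < v) :
    AntitoneOn (fun x : ℝ ↦ (1 - (v / (x + v)) ^ a) / x) (Ioi 0) := by
  intro x (hx : 0 < x) y (hy : 0 < y) hxy
  have := (convexOn_div_add_rpow ha hv).secant_mono (a := 0) (mem_Ici.2 le_rfl) hx.le hy.le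
    hx.ne' hy.ne' hxy
  simp only [zero_add, div_self hv.ne', one_rpow, sub_zero] at this
  rwa [← neg_le_neg_iff, ← neg_div, ← neg_div, neg_sub, neg_sub] at this

theorem integrableOn_rpow_mul_exp_neg_mul {r s : ℝ} (hr : -1 < r) (hs : 0 < s) :
    IntegrableOn (fun w : ℝ ↦ w ^ r * exp (-s * w)) (Ioi 0) := by
  simpa using integrableOn_rpow_mul_exp_neg_mul_rpow hr one_pos hs

theorem integrableOn_mul_exp_neg_mul_of_abs_le {g : ℝ → ℝ} {C r s : ℝ} (hr : -1 < r)
    (hs : 0 < s) (hg : AEStronglyMeasurable g (volume.restrict (Ioi 0)))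
    (hg_le : ∀ w ∈ Ioi (0 : ℝ), |g w| ≤ C * w ^ r) :
    IntegrableOn (fun w ↦ g w * exp (-s * w)) (Ioi 0) := by
  refine ((integrableOn_rpow_mul_exp_neg_mul hr hs).const_mul C).mono'
    (hg.mul (by fun_prop)) ((ae_restrict_iff' measurableSet_Ioi).2 (.of_forall fun w hw ↦ ?_))
  rw [norm_mul, norm_of_nonneg (exp_pos _).le, ← mul_assoc]
  exact mul_le_mul_of_nonneg_right (hg_le w hw) (exp_pos _).le

theorem hasDerivAt_integral_mul_exp_neg_mul {g : ℝ → ℝ} {C r : ℝ} (hr : -1 < r)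
    (hg : AEStronglyMeasurable g (volume.restrict (Ioi 0)))
    (hg_le : ∀ w ∈ Ioi (0 : ℝ), |g w| ≤ C * w ^ r) {x : ℝ} (hx : 0 < x) :
    HasDerivAt (fun y ↦ ∫ w in Ioi 0, g w * exp (-y * w))
      (-∫ w in Ioi 0, g w * (w * exp (-x * w))) x := by
  have hbound : ∀ᵐ w ∂(volume.restrict (Ioi (0 : ℝ))), ∀ y ∈ Metric.ball x (x / 2),
      ‖g w * (-w * exp (-y * w))‖ ≤ C * (w ^ (r + 1) * exp (-(x / 2) * w)) := by
    refine (ae_restrict_iff' measurableSet_Ioi).2 (.of_forall fun w (hw : 0 < w) y hy ↦ ?_)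
    have hxy : x / 2 ≤ y := by
      have := (abs_lt.1 (Metric.mem_ball.1 hy)).1
      linarith
    calc ‖g w * (-w * exp (-y * w))‖ = |g w| * (w * exp (-y * w)) := by
          rw [norm_mul, norm_mul, norm_neg, Real.norm_eq_abs, norm_of_nonneg hw.le,
            norm_of_nonneg (exp_pos _).le]
      _ ≤ C * w ^ r * (w * exp (-(x / 2) * w)) :=
          mul_le_mul (hg_le w hw) (by gcongr) (by positivity) ((abs_nonneg _).trans (hg_le w hw))
      _ = C * (w ^ (r + 1) * exp (-(x / 2) * w)) := by rw [rpow_add_one hw.ne']; ring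
  have hderiv : ∀ w y, HasDerivAt (fun y ↦ g w * exp (-y * w)) (g w * (-w * exp (-y * w))) y :=
    fun w y ↦ by
      simpa [mul_comm] using (((hasDerivAt_id y).neg.mul_const w).exp).const_mul (g w)
  exact (hasDerivAt_integral_of_dominated_loc_of_deriv_le
    (F := fun y w ↦ g w * exp (-y * w)) (Metric.ball_mem_nhds x (half_pos hx))
    (.of_forall fun y ↦ hg.mul (by fun_prop))
    (integrableOn_mul_exp_neg_mul_of_abs_le hr hx hg hg_le) (hg.mul (by fun_prop)) hbound
    ((integrableOn_rpow_mul_exp_neg_mul (by linarith) (half_pos hx)).const_mul C)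
    (.of_forall fun w y _ ↦ hderiv w y)).2.congr_deriv (by
      simp only [neg_mul, mul_neg, integral_neg])

theorem one_sub_div_add_rpow_mem_Icc {a x v : ℝ} (ha : 0 ≤ a) (hx : 0 ≤ x) (hv : 0 < v) :
    1 - (v / (x + v)) ^ a ∈ Icc 0 1 := by
  have hxv : 0 < x + v := by linarith
  have h0 : 0 ≤ v / (x + v) := div_nonneg hv.le hxv.le
  have h1 : v / (x + v) ≤ 1 := (div_le_one hxv).2 (by linarith)
  exact ⟨sub_nonneg.2 (rpow_le_one h0 h1 ha), sub_le_self _ (rpow_nonneg h0 a)⟩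

theorem rpow_add_one_mul_integral_eq {a s x : ℝ} (hx : 0 < x) :
    x ^ (s + 1) * ∫ w in Ioi 0, (1 - (w / (1 + w)) ^ a) * w ^ s * (w * exp (-x * w)) =
      ∫ v in Ioi 0, (1 - (v / (x + v)) ^ a) / x * v ^ (s + 1) * exp (-v) := by
  have hcov := integral_comp_mul_left_Ioi
    (fun v ↦ (1 - (v / (x + v)) ^ a) / x * v ^ (s + 1) * exp (-v)) 0 hx
  rw [mul_zero, smul_eq_mul] at hcov
  rw [eq_inv_mul_iff_mul_eq₀ hx.ne', ← integral_const_mul] at hcov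
  rw [← hcov, ← integral_const_mul]
  refine setIntegral_congr_fun measurableSet_Ioi fun w (hw : 0 < w) ↦ ?_
  have hdiv : x * w / (x + x * w) = w / (1 + w) := by
    rw [show x + x * w = x * (1 + w) by ring, mul_div_mul_left _ _ hx.ne']
  rw [hdiv, mul_rpow hx.le hw.le, rpow_add_one hw.ne', rpow_add_one hx.ne']
  field_simp

section SecantKernel

variable {a t : ℝ}

theorem integrableOn_one_sub_div_add_rpow_div_mul (ha : 0 ≤ a) (ht : -1 < t) {x : ℝ}
    (hx : 0 < x) :
    IntegrableOn (fun v ↦ (1 - (v / (x + v)) ^ a) / x * v ^ t * exp (-v)) (Ioi 0) := by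
  have := integrableOn_mul_exp_neg_mul_of_abs_le ht one_pos
    (g := fun v ↦ (1 - (v / (x + v)) ^ a) / x * v ^ t) (C := x⁻¹) (by fun_prop)
    fun v (hv : 0 < v) ↦ by
      obtain ⟨h0, h1⟩ := one_sub_div_add_rpow_mem_Icc ha hx.le hv
      rw [abs_of_nonneg (by positivity), div_eq_mul_inv, mul_comm _ x⁻¹]
      gcongr
      exact mul_le_of_le_one_right (inv_nonneg.2 hx.le) h1
  simpa using this

theorem integral_one_sub_div_add_rpow_div_mul_nonneg (ha : 0 ≤ a) {x : ℝ} (hx : 0 < x) :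
    0 ≤ ∫ v in Ioi 0, (1 - (v / (x + v)) ^ a) / x * v ^ t * exp (-v) :=
  setIntegral_nonneg measurableSet_Ioi fun v (hv : 0 < v) ↦ by
    have := (one_sub_div_add_rpow_mem_Icc ha hx.le hv).1
    positivity

theorem antitoneOn_integral_one_sub_div_add_rpow_div_mul (ha : 0 ≤ a) (ht : -1 < t) :
    AntitoneOn (fun x ↦ ∫ v in Ioi 0, (1 - (v / (x + v)) ^ a) / x * v ^ t * exp (-v))
      (Ioi 0) := fun x hx y hy hxy ↦
  setIntegral_mono_on (integrableOn_one_sub_div_add_rpow_div_mul ha ht hy)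
    (integrableOn_one_sub_div_add_rpow_div_mul ha ht hx) measurableSet_Ioi fun v (hv : 0 < v) ↦ by
      have hv_pos : 0 < v ^ t * exp (-v) := by positivity
      simpa only [mul_assoc] using mul_le_mul_of_nonneg_right
        (antitoneOn_one_sub_div_add_rpow_div ha hv hx hy hxy) hv_pos.le

end SecantKernel

theorem p_nonneg_antitone_general (n m : ℝ) (hn : 2 < n) (hm2 : m < 2)
    (ψ : ℝ → ℝ)
    (hψ : ∀ x : ℝ, ψ x = (1 / Real.Gamma ((n - m) / 2)) *
      ∫ w in Set.Ioi (0:ℝ),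
        (1 - (w / (1 + w)) ^ (n / 2 - 1)) * w ^ (-m / 2) * Real.exp (-x * w))
    (p : ℝ → ℝ) (hp : ∀ x : ℝ, p x = -x ^ (1 - m / 2) * deriv ψ x) :
    (∀ x ∈ Set.Ioi (0:ℝ), 0 ≤ p x) ∧ AntitoneOn p (Set.Ioi 0) := by
  have ha : 0 ≤ n / 2 - 1 := by linarith
  have hexp : 1 - m / 2 = -m / 2 + 1 := by ring
  have hΓ : 0 < 1 / Gamma ((n - m) / 2) := one_div_pos.2 (Gamma_pos_of_pos (by linarith))
  have hg_le : ∀ w ∈ Ioi (0 : ℝ),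
      |(1 - (w / (1 + w)) ^ (n / 2 - 1)) * w ^ (-m / 2)| ≤ 1 * w ^ (-m / 2) := by
    intro w (hw : 0 < w)
    obtain ⟨h0, h1⟩ := one_sub_div_add_rpow_mem_Icc ha zero_le_one hw
    rw [abs_of_nonneg (by positivity), one_mul]
    exact mul_le_of_le_one_left (by positivity) h1
  have hp_eq : ∀ x ∈ Ioi (0 : ℝ), p x = 1 / Gamma ((n - m) / 2) *
      ∫ v in Ioi 0, (1 - (v / (x + v)) ^ (n / 2 - 1)) / x * v ^ (1 - m / 2) * exp (-v) := by
    intro x (hx : 0 < x)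
    have hderiv := (hasDerivAt_integral_mul_exp_neg_mul (by linarith) (by fun_prop) hg_le
      hx).const_mul (1 / Gamma ((n - m) / 2))
    rw [hp, show ψ = _ from funext hψ, hderiv.deriv, hexp, ← rpow_add_one_mul_integral_eq hx]
    ring
  refine ⟨fun x hx ↦ ?_, fun x hx y hy hxy ↦ ?_⟩
  · rw [hp_eq x hx]
    exact mul_nonneg hΓ.le (integral_one_sub_div_add_rpow_div_mul_nonneg ha hx)
  · rw [hp_eq x hx, hp_eq y hy]
    exact mul_le_mul_of_nonneg_left
      (antitoneOn_integral_one_sub_div_add_rpow_div_mul ha (by linarith) hx hy hxy) hΓ.le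

theorem p_nonneg_antitone (n m : ℝ) (hn : 2 < n) (hm0 : 0 ≤ m) (hm2 : m < 2)
    (ψ : ℝ → ℝ)
    (hψ : ∀ x : ℝ, ψ x = (1 / Real.Gamma ((n - m) / 2)) *
      ∫ w in Set.Ioi (0:ℝ),
        (1 - (w / (1 + w)) ^ (n / 2 - 1)) * w ^ (-m / 2) * Real.exp (-x * w))
    (p : ℝ → ℝ) (hp : ∀ x : ℝ, p x = -x ^ (1 - m / 2) * deriv ψ x) :
    (∀ x ∈ Set.Ioi (0:ℝ), 0 ≤ p x) ∧ AntitoneOn p (Set.Ioi 0) :=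
  p_nonneg_antitone_general n m hn hm2 ψ hψ p hp
end

section
/- Let n > 2, 0 ≤ m < 2, t > 0, x > 0. With f(t,x) = (1/Γ((n-m)/2)) ∫₀^∞ (x + 2tw)^(1-n/2) w^((n-m)/2-1) e^(-w) dw and ψ(x) = (1/Γ((n-m)/2)) ∫₀^∞ (1 - (w/(1+w))^(n/2-1)) w^(-m/2) e^(-xw) dw, one has f(t,x) = f(t,0) - x^(1-m/2) (2t)^(-(n-m)/2) ψ(x/(2t)). -/
open MeasureTheory Real Set

lemma aux_key (n m t x u : ℝ) (hn : 2 < n) (hm0 : 0 ≤ m) (hm2 : m < 2)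
    (ht : 0 < t) (hx : 0 < x) (hud : u = x / (2 * t)) :
    (∫ w in Ioi (0:ℝ), (0 + 2*t*w)^(1-n/2) * w^((n-m)/2-1) * Real.exp (-w))
      - (∫ w in Ioi (0:ℝ), (x + 2*t*w)^(1-n/2) * w^((n-m)/2-1) * Real.exp (-w))
    = x^(1-m/2) * (2*t)^(-((n-m)/2)) *
        ∫ w in Ioi (0:ℝ), (1 - (w/(1+w))^(n/2-1)) * w^(-m/2) * Real.exp (-u*w) := by
  have h2t : (0:ℝ) < 2 * t := by linarith
  have hu : 0 < u := by rw [hud]; exact div_pos hx h2t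
  have hxu : 2 * t * u = x := by rw [hud]; field_simp
  have hnm : 0 < (n - m) / 2 := by linarith
  -- integrability of the z = 0 integrand
  have hint0 : IntegrableOn
      (fun w : ℝ => (0 + 2*t*w)^(1-n/2) * w^((n-m)/2-1) * Real.exp (-w)) (Ioi 0) := by
    have hG : IntegrableOn (fun w : ℝ => Real.exp (-w) * w ^ ((1 - m/2) - 1)) (Ioi 0) :=
      Real.GammaIntegral_convergent (by linarith)
    have hG2 : IntegrableOn (fun w : ℝ => (2*t)^(1-n/2) * (Real.exp (-w) * w ^ ((1 - m/2) - 1))) (Ioi 0) :=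
      hG.const_mul _
    refine hG2.congr_fun ?_ measurableSet_Ioi
    intro w hw
    have hw : (0:ℝ) < w := hw
    show (2*t)^(1-n/2) * (Real.exp (-w) * w ^ ((1 - m/2) - 1))
        = (0 + 2*t*w)^(1-n/2) * w^((n-m)/2-1) * Real.exp (-w)
    rw [zero_add, Real.mul_rpow h2t.le hw.le,
      show (2*t)^(1-n/2) * w^(1-n/2) * w^((n-m)/2-1) * Real.exp (-w)
        = (2*t)^(1-n/2) * ((w^(1-n/2) * w^((n-m)/2-1)) * Real.exp (-w)) from by ring,
      ← Real.rpow_add hw, show (1-n/2) + ((n-m)/2-1) = (1-m/2)-1 from by ring]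
    ring
  -- integrability of the z = x integrand
  have hint1 : IntegrableOn
      (fun w : ℝ => (x + 2*t*w)^(1-n/2) * w^((n-m)/2-1) * Real.exp (-w)) (Ioi 0) := by
    have hG : IntegrableOn (fun w : ℝ => Real.exp (-w) * w ^ ((n-m)/2 - 1)) (Ioi 0) :=
      Real.GammaIntegral_convergent hnm
    have hmeas : AEStronglyMeasurable
        (fun w : ℝ => (x + 2*t*w)^(1-n/2) * w^((n-m)/2-1) * Real.exp (-w))
        (volume.restrict (Ioi 0)) := by
      refine (ContinuousOn.mul (ContinuousOn.mul ?_ ?_) ?_).aestronglyMeasurable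
        measurableSet_Ioi
      · intro w hw
        have hw' : (0:ℝ) < w := hw
        have hne : x + 2*t*w ≠ 0 := by positivity
        exact ((continuousAt_const.add (continuousAt_const.mul
          continuousAt_id)).rpow_const (Or.inl hne)).continuousWithinAt
      · exact fun w hw => (Real.continuousAt_rpow_const _ _
          (Or.inl (ne_of_gt hw))).continuousWithinAt
      · exact (Real.continuous_exp.comp continuous_neg).continuousOn
    refine Integrable.mono' (hG.const_mul (x^(1-n/2))) hmeas ?_
    filter_upwards [ae_restrict_mem measurableSet_Ioi] with w hw
    have hw : (0:ℝ) < w := hw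
    have h1 : (0:ℝ) < x + 2*t*w := by positivity
    rw [Real.norm_eq_abs, abs_of_nonneg (by positivity)]
    have hb : (x + 2*t*w)^(1-n/2) ≤ x^(1-n/2) :=
      Real.rpow_le_rpow_of_nonpos hx (by nlinarith [mul_pos ht hw]) (by linarith)
    calc (x + 2*t*w)^(1-n/2) * w^((n-m)/2-1) * Real.exp (-w)
        ≤ x^(1-n/2) * w^((n-m)/2-1) * Real.exp (-w) := by
          have : (0:ℝ) ≤ w^((n-m)/2-1) * Real.exp (-w) := by positivity
          nlinarith [this, hb]
      _ = x^(1-n/2) * (Real.exp (-w) * w ^ ((n-m)/2 - 1)) := by ring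
  -- combine into a single integral
  rw [← integral_sub hint0 hint1]
  set H : ℝ → ℝ := fun w =>
    ((2*t*w)^(1-n/2) - (x + 2*t*w)^(1-n/2)) * (w^((n-m)/2-1) * Real.exp (-w)) with hH
  have e1 : (∫ w in Ioi (0:ℝ),
      ((0 + 2*t*w)^(1-n/2) * w^((n-m)/2-1) * Real.exp (-w)
        - (x + 2*t*w)^(1-n/2) * w^((n-m)/2-1) * Real.exp (-w))) = ∫ w in Ioi (0:ℝ), H w := by
    refine setIntegral_congr_fun measurableSet_Ioi (fun w hw => ?_)
    simp only [hH, zero_add]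
    ring
  rw [e1]
  -- change of variables w = u * v
  have cov : ∫ w in Ioi (0:ℝ), H (u * w) = u⁻¹ • ∫ w in Ioi (0:ℝ), H w := by
    simpa using integral_comp_mul_left_Ioi H 0 hu
  have e2 : ∫ w in Ioi (0:ℝ), H w = u * ∫ w in Ioi (0:ℝ), H (u * w) := by
    rw [cov, smul_eq_mul, ← mul_assoc, mul_inv_cancel₀ hu.ne', one_mul]
  rw [e2, ← integral_const_mul]
  rw [← integral_const_mul]
  refine setIntegral_congr_fun measurableSet_Ioi (fun w hw => ?_)
  have hw : (0:ℝ) < w := hw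
  have hw1 : (0:ℝ) < 1 + w := by linarith
  simp only [hH]
  have f1 : 2*t*(u*w) = x * w := by rw [← hxu]; ring
  have f2 : x + 2*t*(u*w) = x * (1 + w) := by rw [← hxu]; ring
  have f4 : w^(1-n/2) * (w/(1+w))^(n/2-1) = (1+w)^(1-n/2) := by
    rw [Real.div_rpow hw.le hw1.le, mul_div_assoc', ← Real.rpow_add hw]
    rw [show (1-n/2) + (n/2-1) = 0 by ring, Real.rpow_zero]
    rw [show (1-n/2) = -(n/2-1) by ring, Real.rpow_neg hw1.le]
    exact one_div _
  have f5 : w^(1-n/2) * w^((n-m)/2-1) = w^(-m/2) := by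
    rw [← Real.rpow_add hw]; congr 1; ring
  have f6 : u * u^((n-m)/2-1) = x^((n-m)/2) * (2*t)^(-((n-m)/2)) := by
    have h : u * u^((n-m)/2-1) = u^((n-m)/2) := by
      nth_rewrite 1 [← Real.rpow_one u]
      rw [← Real.rpow_add hu]; congr 1; ring
    rw [h, hud, Real.div_rpow hx.le h2t.le, Real.rpow_neg h2t.le, div_eq_mul_inv]
  have f7 : x^(1-n/2) * x^((n-m)/2) = x^(1-m/2) := by
    rw [← Real.rpow_add hx]; congr 1; ring
  rw [f2, f1, Real.mul_rpow hx.le hw.le, Real.mul_rpow hx.le hw1.le,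
      Real.mul_rpow hu.le hw.le, ← f4, (neg_mul u w).symm]
  linear_combination
    (x^(1-n/2) * w^(1-n/2) * w^((n-m)/2-1) * (1 - (w/(1+w))^(n/2-1)) * Real.exp (-u*w)) * f6
    + (x^(1-n/2) * x^((n-m)/2) * (2*t)^(-((n-m)/2)) * (1 - (w/(1+w))^(n/2-1)) * Real.exp (-u*w)) * f5
    + ((2*t)^(-((n-m)/2)) * w^(-m/2) * (1 - (w/(1+w))^(n/2-1)) * Real.exp (-u*w)) * f7

theorem f_decomposition (n m t x : ℝ) (hn : 2 < n) (hm0 : 0 ≤ m) (hm2 : m < 2)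
    (ht : 0 < t) (hx : 0 < x)
    (f : ℝ → ℝ → ℝ)
    (hf : ∀ s z : ℝ, 0 < s → 0 ≤ z → f s z = (1 / Real.Gamma ((n - m) / 2)) *
      ∫ w in Set.Ioi (0:ℝ),
        (z + 2 * s * w) ^ (1 - n / 2) * w ^ ((n - m) / 2 - 1) * Real.exp (-w))
    (ψ : ℝ → ℝ)
    (hψ : ∀ u : ℝ, ψ u = (1 / Real.Gamma ((n - m) / 2)) *
      ∫ w in Set.Ioi (0:ℝ),
        (1 - (w / (1 + w)) ^ (n / 2 - 1)) * w ^ (-m / 2) * Real.exp (-u * w)) :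
    f t x = f t 0 - x ^ (1 - m / 2) * (2 * t) ^ (-((n - m) / 2)) * ψ (x / (2 * t)) := by
  have key := aux_key n m t x (x / (2*t)) hn hm0 hm2 ht hx rfl
  rw [hf t x ht hx.le, hf t 0 ht le_rfl, hψ (x / (2*t))]
  have hΓ : 0 < Real.Gamma ((n - m) / 2) := Real.Gamma_pos_of_pos (by linarith)
  linear_combination (-(1 / Real.Gamma ((n - m) / 2))) * key
end

section
/- For t > 0 and x ≥ 0, ∫₀^∞ (1/(2t)) (x + y)^(-1/2) e^(-y/(2t)) dy = √(2π/t) · e^(x/(2t)) · (1 - Φ(√(x/t))), where Φ is the standard normal cumulative distribution function. -/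
/-!
Substituting `y = u ^ 2 - x` turns `(x + y) ^ (-1/2) dy` into `2 du`, so the integral becomes
`exp (x / (2t)) / t` times the Gaussian tail `∫_{√x}^∞ exp (-u ^ 2 / (2t)) du`; rescaling `u = √t v`
identifies that tail with `√t · √(2π) · (1 - Φ (√(x / t)))`.
-/

open MeasureTheory Real

/-- Standard normal cumulative distribution function. -/
noncomputable def stdNormalCdf (z : ℝ) : ℝ :=
  ∫ u in Set.Iic z, (Real.sqrt (2 * Real.pi))⁻¹ * Real.exp (-u ^ 2 / 2)

open Set

theorem image_sq_sub_Ioi_sqrt {c : ℝ} (hc : 0 ≤ c) :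
    (fun u : ℝ => u ^ 2 - c) '' Ioi √c = Ioi 0 := by
  ext y
  simp only [mem_image, mem_Ioi]
  constructor
  · rintro ⟨u, hu, rfl⟩
    have := (sqrt_lt' (lt_of_le_of_lt (sqrt_nonneg c) hu)).mp hu
    linarith
  · intro hy
    refine ⟨√(y + c), sqrt_lt_sqrt hc (by linarith), ?_⟩
    rw [sq_sqrt (by linarith)]
    ring

theorem integral_Ioi_comp_sq_sub {E : Type*} [NormedAddCommGroup E] [NormedSpace ℝ E]
    {c : ℝ} (hc : 0 ≤ c) (f : ℝ → E) :
    ∫ u in Ioi √c, (2 * u) • f (u ^ 2 - c) = ∫ y in Ioi 0, f y := by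
  have hpos : ∀ u ∈ Ioi √c, 0 < u := fun u hu => lt_of_le_of_lt (sqrt_nonneg c) hu
  have hderiv : ∀ u ∈ Ioi √c, HasDerivWithinAt (fun u : ℝ => u ^ 2 - c) (2 * u) (Ioi √c) u :=
    fun u _ => by simpa using ((hasDerivAt_pow 2 u).sub_const c).hasDerivWithinAt
  have hinj : InjOn (fun u : ℝ => u ^ 2 - c) (Ioi √c) := fun u hu v hv huv =>
    (sq_eq_sq₀ (hpos u hu).le (hpos v hv).le).mp (sub_left_injective huv)
  rw [← image_sq_sub_Ioi_sqrt hc,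
    integral_image_eq_integral_abs_deriv_smul measurableSet_Ioi hderiv hinj]
  refine setIntegral_congr_fun measurableSet_Ioi fun u hu => ?_
  rw [abs_of_pos (by linarith [hpos u hu])]

theorem integral_Ioi_exp_neg_sq_div_two (a : ℝ) :
    ∫ u in Ioi a, exp (-u ^ 2 / 2) = √(2 * π) * (1 - stdNormalCdf a) := by
  have hform : (fun u : ℝ => exp (-u ^ 2 / 2)) = fun u => exp (-(1 / 2) * u ^ 2) := by
    ext u; ring_nf
  have hint : Integrable fun u : ℝ => exp (-u ^ 2 / 2) :=
    hform ▸ integrable_exp_neg_mul_sq (by norm_num)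
  have htotal : ∫ u, exp (-u ^ 2 / 2) = √(2 * π) := by
    rw [hform, integral_gaussian]; congr 1; ring
  have hsplit := intervalIntegral.integral_Iic_add_Ioi hint.integrableOn hint.integrableOn (b := a)
  rw [htotal] at hsplit
  rw [stdNormalCdf, integral_const_mul, mul_sub, mul_one, ← mul_assoc,
    mul_inv_cancel₀ (by positivity), one_mul]
  linarith

theorem integral_Ioi_exp_neg_sq_div {t : ℝ} (ht : 0 < t) (b : ℝ) :
    ∫ u in Ioi b, exp (-u ^ 2 / (2 * t)) = √t * √(2 * π) * (1 - stdNormalCdf (b / √t)) := by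
  have hst : 0 < √t := sqrt_pos.mpr ht
  have hscale : ∀ u, exp (-u ^ 2 / (2 * t)) = exp (-((√t)⁻¹ * u) ^ 2 / 2) := fun u => by
    rw [mul_pow, inv_pow, sq_sqrt ht.le]; ring_nf
  simp_rw [hscale]
  rw [integral_comp_mul_left_Ioi (fun v => exp (-v ^ 2 / 2)) b (inv_pos.mpr hst),
    integral_Ioi_exp_neg_sq_div_two, smul_eq_mul, inv_inv, inv_mul_eq_div, mul_assoc]

theorem projection_n_three_m_one (t x : ℝ) (ht : 0 < t) (hx : 0 ≤ x) :
    ∫ y in Set.Ioi (0:ℝ), (1 / (2 * t)) * (x + y) ^ (-(1:ℝ) / 2) * Real.exp (-y / (2 * t)) =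
      Real.sqrt (2 * Real.pi / t) * Real.exp (x / (2 * t)) *
        (1 - stdNormalCdf (Real.sqrt (x / t))) := by
  have hpointwise : ∀ u ∈ Ioi √x,
      (2 * u) • ((1 / (2 * t)) * (x + (u ^ 2 - x)) ^ (-(1:ℝ) / 2) * exp (-(u ^ 2 - x) / (2 * t)))
        = exp (x / (2 * t)) / t * exp (-u ^ 2 / (2 * t)) := fun u hu => by
    have hu : 0 < u := lt_of_le_of_lt (sqrt_nonneg x) hu
    have hrpow : (u ^ 2) ^ (-(1:ℝ) / 2) = u⁻¹ := by
      rw [← rpow_natCast, ← rpow_mul hu.le]; norm_num [rpow_neg_one]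
    have hexp : exp (-(u ^ 2 - x) / (2 * t)) = exp (x / (2 * t)) * exp (-u ^ 2 / (2 * t)) := by
      rw [← exp_add]; ring_nf
    rw [smul_eq_mul, add_sub_cancel, hrpow, hexp]
    field_simp
  rw [← integral_Ioi_comp_sq_sub hx, setIntegral_congr_fun measurableSet_Ioi hpointwise,
    integral_const_mul, integral_Ioi_exp_neg_sq_div ht, sqrt_div hx, sqrt_div' _ ht.le]
  field_simp
  rw [sq_sqrt ht.le]
end

section
/- Let n ≥ 2 and 0 ≤ m < n. The function f(t,x) defined for t > 0, x > 0 by f(t,x) = (1/Γ((n-m)/2)) ∫₀^∞ (x + 2tw)^(1-n/2) w^((n-m)/2-1) e^(-w) dw (n > 2) or by the analogous formula with -log(x + 2tw) and w^(-m/2) (n = 2) satisfies the PDE f_t(t,x) + m f_x(t,x) + 2x f_xx(t,x) = 0 on (0,∞)². -/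
/-!
Write the integrand as `G (x + 2 t w) * ρ w` with `ρ w = w ^ p * exp (-w)` and
`G u = u ^ (1 - n / 2)`, respectively `G u = -log u` in the logarithmic case. In both cases `G' u = c * u ^ r`
with `r ≤ 0` and `m + 2 p + 2 r + 2 = 0`, and `|G'|`, `|G''|` are decreasing, so they are dominated
on `x + 2 t w ≥ x / 2` and the integral may be differentiated under the integral sign:
`∂ₜ = 2 ∫ G' (x + 2 t w) w ρ`, `∂ₓ = ∫ G' (x + 2 t w) ρ`, `∂ₓ² = ∫ G'' (x + 2 t w) ρ`.
With this choice of `r`, the combination `∂ₜ + m ∂ₓ + 2 x ∂ₓ²` is the integral over `(0, ∞)` of the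
exact derivative of `-2 c w ^ (p + 1) (x + 2 t w) ^ r exp (-w)`, which vanishes at both ends.
-/

open MeasureTheory Real Set Filter Topology

noncomputable def affineIntegral (G ρ : ℝ → ℝ) (t x : ℝ) : ℝ :=
  ∫ w in Ioi 0, G (x + 2 * t * w) * ρ w

section AffineIntegral

variable {G G' ρ : ℝ → ℝ} {t x : ℝ}

lemma abs_le_of_antitoneOn_abs_deriv (hG : ∀ u, 0 < u → HasDerivAt G (G' u) u)
    (hG' : AntitoneOn (fun u => |G' u|) (Ioi 0)) {a b : ℝ} (ha : 0 < a) (hab : a ≤ b) :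
    |G b| ≤ |G a| + |G' a| * (b - a) := by
  have hmvt := norm_image_sub_le_of_norm_deriv_le_segment' (f := G) (C := |G' a|)
    (fun v hv => (hG v (ha.trans_le hv.1)).hasDerivWithinAt)
    (fun v hv => hG' ha (ha.trans_le hv.1) hv.1) b ⟨hab, le_rfl⟩
  rw [Real.norm_eq_abs] at hmvt
  linarith [abs_sub_abs_le_abs_sub (G b) (G a)]

lemma aestronglyMeasurable_comp_affine_mul (hGm : Measurable G) (hρ : IntegrableOn ρ (Ioi 0))
    (t x : ℝ) :
    AEStronglyMeasurable (fun w => G (x + 2 * t * w) * ρ w) (volume.restrict (Ioi 0)) :=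
  (hGm.comp (by fun_prop)).aestronglyMeasurable.mul hρ.aestronglyMeasurable

lemma integrableOn_comp_affine_mul (hG : ∀ u, 0 < u → HasDerivAt G (G' u) u)
    (hG' : AntitoneOn (fun u => |G' u|) (Ioi 0)) (hGm : Measurable G)
    (hρ : IntegrableOn ρ (Ioi 0)) (hwρ : IntegrableOn (fun w => w * ρ w) (Ioi 0))
    (ht : 0 ≤ t) (hx : 0 < x) :
    IntegrableOn (fun w => G (x + 2 * t * w) * ρ w) (Ioi 0) := by
  refine Integrable.mono' ((hρ.norm.const_mul |G x|).add (hwρ.norm.const_mul (|G' x| * (2 * t))))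
    (aestronglyMeasurable_comp_affine_mul hGm hρ t x) ?_
  filter_upwards [ae_restrict_mem measurableSet_Ioi] with w (hw : 0 < w)
  have hbound := abs_le_of_antitoneOn_abs_deriv hG hG' hx (by nlinarith : x ≤ x + 2 * t * w)
  simp only [Pi.add_apply, norm_mul, Real.norm_eq_abs, abs_of_pos hw]
  calc |G (x + 2 * t * w)| * |ρ w| ≤ (|G x| + |G' x| * (x + 2 * t * w - x)) * |ρ w| := by gcongr
    _ = |G x| * |ρ w| + |G' x| * (2 * t) * (w * |ρ w|) := by ring

lemma hasDerivAt_affineIntegral_time (hG : ∀ u, 0 < u → HasDerivAt G (G' u) u)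
    (hG' : AntitoneOn (fun u => |G' u|) (Ioi 0)) (hGm : Measurable G) (hG'm : Measurable G')
    (hρ : IntegrableOn ρ (Ioi 0)) (hwρ : IntegrableOn (fun w => w * ρ w) (Ioi 0))
    (ht : 0 < t) (hx : 0 < x) :
    HasDerivAt (fun s => affineIntegral G ρ s x)
      (2 * affineIntegral G' (fun w => w * ρ w) t x) t := by
  have h := (hasDerivAt_integral_of_dominated_loc_of_deriv_le (Ioi_mem_nhds ht)
    (F' := fun s w => 2 * (G' (x + 2 * s * w) * (w * ρ w)))
    (Eventually.of_forall fun s => aestronglyMeasurable_comp_affine_mul hGm hρ s x)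
    (integrableOn_comp_affine_mul hG hG' hGm hρ hwρ ht.le hx)
    ((aestronglyMeasurable_comp_affine_mul hG'm hwρ t x).const_mul 2)
    (bound := fun w => 2 * (|G' x| * ‖w * ρ w‖)) ?_ ((hwρ.norm.const_mul _).const_mul 2) ?_).2
  · rwa [integral_const_mul] at h
  · filter_upwards [ae_restrict_mem measurableSet_Ioi] with w (hw : 0 < w) s (hs : 0 < s)
    rw [norm_mul, norm_mul, Real.norm_eq_abs, Real.norm_eq_abs, abs_two]
    gcongr 2 * ?_
    exact mul_le_mul_of_nonneg_right (hG' hx (by simp only [mem_Ioi]; positivity) (by nlinarith))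
      (norm_nonneg _)
  · filter_upwards [ae_restrict_mem measurableSet_Ioi] with w (hw : 0 < w) s (hs : 0 < s)
    have hu : HasDerivAt (fun s => x + 2 * s * w) (2 * w) s := by
      simpa using (((hasDerivAt_id s).const_mul 2).mul_const w).const_add x
    exact (((hG _ (by positivity)).comp s hu).mul_const (ρ w)).congr_deriv (by ring)

lemma hasDerivAt_affineIntegral_space (hG : ∀ u, 0 < u → HasDerivAt G (G' u) u)
    (hG' : AntitoneOn (fun u => |G' u|) (Ioi 0)) (hGm : Measurable G) (hG'm : Measurable G')
    (hρ : IntegrableOn ρ (Ioi 0)) (hwρ : IntegrableOn (fun w => w * ρ w) (Ioi 0))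
    (ht : 0 ≤ t) (hx : 0 < x) :
    HasDerivAt (fun y => affineIntegral G ρ t y) (affineIntegral G' ρ t x) x := by
  refine (hasDerivAt_integral_of_dominated_loc_of_deriv_le (Ioi_mem_nhds (half_lt_self hx))
    (F' := fun y w => G' (y + 2 * t * w) * ρ w)
    (Eventually.of_forall fun y => aestronglyMeasurable_comp_affine_mul hGm hρ t y)
    (integrableOn_comp_affine_mul hG hG' hGm hρ hwρ ht hx)
    (aestronglyMeasurable_comp_affine_mul hG'm hρ t x)
    (bound := fun w => |G' (x / 2)| * ‖ρ w‖) ?_ (hρ.norm.const_mul _) ?_).2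
  · filter_upwards [ae_restrict_mem measurableSet_Ioi] with w (hw : 0 < w) y (hy : x / 2 < y)
    rw [norm_mul, Real.norm_eq_abs]
    exact mul_le_mul_of_nonneg_right (hG' (half_pos hx) (by simp only [mem_Ioi]; nlinarith)
      (by nlinarith)) (norm_nonneg _)
  · filter_upwards [ae_restrict_mem measurableSet_Ioi] with w (hw : 0 < w) y (hy : x / 2 < y)
    have hpos : 0 < y + 2 * t * w := by nlinarith
    simpa using ((hG _ hpos).comp y ((hasDerivAt_id y).add_const (2 * t * w))).mul_const (ρ w)

end AffineIntegral

noncomputable def gammaWeight (p w : ℝ) : ℝ := w ^ p * exp (-w)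

lemma gammaWeight_nonneg {p w : ℝ} (hw : 0 ≤ w) : 0 ≤ gammaWeight p w := by
  unfold gammaWeight
  positivity

lemma integrableOn_gammaWeight {p : ℝ} (hp : -1 < p) : IntegrableOn (gammaWeight p) (Ioi 0) := by
  refine (GammaIntegral_convergent (by linarith : 0 < p + 1)).congr_fun (fun w _ => ?_)
    measurableSet_Ioi
  rw [gammaWeight, add_sub_cancel_right, mul_comm]

lemma mul_gammaWeight {p w : ℝ} (hw : 0 < w) : w * gammaWeight p w = gammaWeight (p + 1) w := by
  rw [gammaWeight, gammaWeight, rpow_add_one hw.ne']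
  ring

lemma integrableOn_mul_gammaWeight {p : ℝ} (hp : -1 < p) :
    IntegrableOn (fun w => w * gammaWeight p w) (Ioi 0) :=
  (integrableOn_gammaWeight (by linarith : -1 < p + 1)).congr_fun
    (fun _ hw => (mul_gammaWeight hw).symm) measurableSet_Ioi

lemma antitoneOn_abs_const_mul_rpow (c : ℝ) {r : ℝ} (hr : r ≤ 0) :
    AntitoneOn (fun u => |c * u ^ r|) (Ioi 0) := fun a ha b _ hab => by
  simp only [abs_mul, abs_of_pos (rpow_pos_of_pos (ha.out.trans_le hab) r),
    abs_of_pos (rpow_pos_of_pos ha.out r)]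
  exact mul_le_mul_of_nonneg_left (rpow_le_rpow_of_nonpos ha hab hr) (abs_nonneg c)

lemma hasDerivAt_const_mul_rpow (c r : ℝ) {u : ℝ} (hu : 0 < u) :
    HasDerivAt (fun u => c * u ^ r) (c * r * u ^ (r - 1)) u := by
  simpa only [mul_assoc] using (hasDerivAt_rpow_const (Or.inl hu.ne')).const_mul c

lemma hasDerivAt_gammaWeight_succ {p w : ℝ} (hw : 0 < w) :
    HasDerivAt (gammaWeight (p + 1)) ((p + 1) * gammaWeight p w - gammaWeight (p + 1) w) w := by
  refine ((hasDerivAt_rpow_const (Or.inl hw.ne')).mul (hasDerivAt_neg w).exp).congr_deriv ?_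
  simp only [gammaWeight, add_sub_cancel_right]
  ring

lemma tendsto_gammaWeight_atTop (p : ℝ) : Tendsto (gammaWeight p) atTop (𝓝 0) := by
  have h := tendsto_rpow_mul_exp_neg_mul_atTop_nhds_zero p 1 one_pos
  simp only [neg_mul, one_mul] at h
  exact h

lemma integrableOn_rpow_affine_mul_gammaWeight (c : ℝ) {r p t x : ℝ} (hr : r ≤ 0) (hp : -1 < p)
    (ht : 0 ≤ t) (hx : 0 < x) :
    IntegrableOn (fun w => c * (x + 2 * t * w) ^ r * gammaWeight p w) (Ioi 0) :=
  integrableOn_comp_affine_mul (fun _ hu => hasDerivAt_const_mul_rpow c r hu)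
    (antitoneOn_abs_const_mul_rpow (c * r) (by linarith)) (by fun_prop)
    (integrableOn_gammaWeight hp) (integrableOn_mul_gammaWeight hp) ht hx

lemma tendsto_gammaWeight_mul_rpow_affine_atTop (p : ℝ) {r t x : ℝ} (hr : r ≤ 0) (ht : 0 ≤ t)
    (hx : 0 < x) : Tendsto (fun w => gammaWeight p w * (x + 2 * t * w) ^ r) atTop (𝓝 0) := by
  have h := (tendsto_gammaWeight_atTop p).mul_const (x ^ r)
  rw [zero_mul] at h
  refine squeeze_zero' ?_ ?_ h
  · filter_upwards [eventually_gt_atTop 0] with w hw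
    exact mul_nonneg (gammaWeight_nonneg hw.le) (by positivity)
  · filter_upwards [eventually_gt_atTop 0] with w hw
    exact mul_le_mul_of_nonneg_left (rpow_le_rpow_of_nonpos hx (by nlinarith) hr)
      (gammaWeight_nonneg hw.le)

lemma hasDerivAt_gammaWeight_mul_rpow_affine (c : ℝ) {r p m t x w : ℝ}
    (hm : m + 2 * p + 2 * r + 2 = 0) (ht : 0 ≤ t) (hx : 0 < x) (hw : 0 < w) :
    HasDerivAt (fun w => -2 * c * (gammaWeight (p + 1) w * (x + 2 * t * w) ^ r))
      (2 * (c * (x + 2 * t * w) ^ r * gammaWeight (p + 1) w)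
        + m * (c * (x + 2 * t * w) ^ r * gammaWeight p w)
        + 2 * x * (c * r * (x + 2 * t * w) ^ (r - 1) * gammaWeight p w)) w := by
  have hB : 0 < x + 2 * t * w := by positivity
  have hu : HasDerivAt (fun w => x + 2 * t * w) (2 * t) w := by
    simpa using ((hasDerivAt_id w).const_mul (2 * t)).const_add x
  refine (((hasDerivAt_gammaWeight_succ hw).mul (hu.rpow_const (Or.inl hB.ne'))).const_mul
    (-2 * c)).congr_deriv ?_
  have hBr : (x + 2 * t * w) ^ r = (x + 2 * t * w) ^ (r - 1) * (x + 2 * t * w) := by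
    rw [← rpow_add_one hB.ne', sub_add_cancel]
  rw [← mul_gammaWeight hw, hBr]
  linear_combination (-(c * gammaWeight p w * (x + 2 * t * w) ^ (r - 1) * (x + 2 * t * w))) * hm

lemma affineIntegral_rpow_recurrence (c : ℝ) {r p m t x : ℝ} (hr : r ≤ 0) (hp : -1 < p)
    (hm : m + 2 * p + 2 * r + 2 = 0) (ht : 0 ≤ t) (hx : 0 < x) :
    2 * affineIntegral (fun u => c * u ^ r) (gammaWeight (p + 1)) t x
      + m * affineIntegral (fun u => c * u ^ r) (gammaWeight p) t x
      + 2 * x * affineIntegral (fun u => c * r * u ^ (r - 1)) (gammaWeight p) t x = 0 := by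
  have h1 := (integrableOn_rpow_affine_mul_gammaWeight c hr
    (by linarith : -1 < p + 1) ht hx).const_mul 2
  have h2 := (integrableOn_rpow_affine_mul_gammaWeight c hr hp ht hx).const_mul m
  have h3 := (integrableOn_rpow_affine_mul_gammaWeight (c * r)
    (by linarith : r - 1 ≤ 0) hp ht hx).const_mul (2 * x)
  have hcont : ContinuousAt (fun w => -2 * c * (gammaWeight (p + 1) w * (x + 2 * t * w) ^ r)) 0 :=
    continuousAt_const.mul (((continuousAt_id.rpow_const (Or.inr (by linarith))).mul
      (by fun_prop)).mul ((by fun_prop : ContinuousAt (fun w => x + 2 * t * w) 0).rpow_const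
        (Or.inl (by simp [hx.ne']))))
  have hlim := (tendsto_gammaWeight_mul_rpow_affine_atTop (p + 1) hr ht hx).const_mul (-2 * c)
  rw [mul_zero] at hlim
  have hFTC := integral_Ioi_of_hasDerivAt_of_tendsto hcont.continuousWithinAt
    (fun w hw => hasDerivAt_gammaWeight_mul_rpow_affine c hm ht hx hw) ((h1.add h2).add h3) hlim
  have hγ0 : gammaWeight (p + 1) 0 = 0 := by rw [gammaWeight, zero_rpow (by linarith), zero_mul]
  rw [integral_add _ h3, integral_add h1 h2, integral_const_mul, integral_const_mul,
    integral_const_mul, hγ0, zero_mul, mul_zero, sub_zero] at hFTC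
  exacts [hFTC, h1.add h2]

/-- `∂ₜ` plus the generator `m ∂ₓ + 2 x ∂ₓ²` of the squared Bessel process of dimension `m`. -/
noncomputable def besqBackwardOperator (m : ℝ) (f : ℝ → ℝ → ℝ) (t x : ℝ) : ℝ :=
  deriv (fun s => f s x) t + m * deriv (fun y => f t y) x + 2 * x * deriv (deriv (fun y => f t y)) x

lemma besqBackwardOperator_of_eqOn_const_mul {f g : ℝ → ℝ → ℝ} {c m t x : ℝ}
    (hfg : ∀ s y, 0 < s → 0 < y → f s y = c * g s y) (ht : 0 < t) (hx : 0 < x) :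
    besqBackwardOperator m f t x = c * besqBackwardOperator m g t x := by
  have htime : (fun s => f s x) =ᶠ[𝓝 t] fun s => c * g s x := by
    filter_upwards [Ioi_mem_nhds ht] with s hs using hfg s x hs hx
  have hspace : (fun y => f t y) =ᶠ[𝓝 x] fun y => c * g t y := by
    filter_upwards [Ioi_mem_nhds hx] with y hy using hfg t y ht hy
  unfold besqBackwardOperator
  rw [htime.deriv_eq, hspace.deriv_eq, hspace.deriv.deriv_eq, deriv_const_mul_field,
    deriv_const_mul_field', deriv_const_mul_field]
  ring

lemma besqBackwardOperator_affineIntegral_gammaWeight {G : ℝ → ℝ} {c r p m t x : ℝ}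
    (hG : ∀ u, 0 < u → HasDerivAt G (c * u ^ r) u) (hGm : Measurable G) (hr : r ≤ 0)
    (hp : -1 < p) (hm : m + 2 * p + 2 * r + 2 = 0) (ht : 0 < t) (hx : 0 < x) :
    besqBackwardOperator m (affineIntegral G (gammaWeight p)) t x = 0 := by
  have hρ := integrableOn_gammaWeight hp
  have hwρ := integrableOn_mul_gammaWeight hp
  have hG'm : Measurable fun u => c * u ^ r := by fun_prop
  have htime := hasDerivAt_affineIntegral_time hG (antitoneOn_abs_const_mul_rpow c hr) hGm hG'm
    hρ hwρ ht hx
  have hspace : ∀ y, 0 < y → HasDerivAt (fun y => affineIntegral G (gammaWeight p) t y)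
      (affineIntegral (fun u => c * u ^ r) (gammaWeight p) t y) y := fun y hy =>
    hasDerivAt_affineIntegral_space hG (antitoneOn_abs_const_mul_rpow c hr) hGm hG'm hρ hwρ ht.le hy
  have hspace2 := hasDerivAt_affineIntegral_space (fun u hu => hasDerivAt_const_mul_rpow c r hu)
    (antitoneOn_abs_const_mul_rpow (c * r) (by linarith)) hG'm (by fun_prop) hρ hwρ ht.le hx
  have hderiv : deriv (fun y => affineIntegral G (gammaWeight p) t y)
      =ᶠ[𝓝 x] fun y => affineIntegral (fun u => c * u ^ r) (gammaWeight p) t y := by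
    filter_upwards [Ioi_mem_nhds hx] with y hy using (hspace y hy).deriv
  have hweight : affineIntegral (fun u => c * u ^ r) (fun w => w * gammaWeight p w) t x
      = affineIntegral (fun u => c * u ^ r) (gammaWeight (p + 1)) t x :=
    setIntegral_congr_fun measurableSet_Ioi fun w hw => by dsimp only; rw [mul_gammaWeight hw]
  unfold besqBackwardOperator
  rw [htime.deriv, (hspace x hx).deriv, hderiv.deriv_eq, hspace2.deriv, hweight]
  exact affineIntegral_rpow_recurrence c hr hp hm ht.le hx

theorem f_satisfies_pde_general (n m : ℝ) (hmn : m < n)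
    (f : ℝ → ℝ → ℝ)
    (hf : ∀ t x : ℝ, 0 < t → 0 < x → f t x =
      if 2 < n then
        (1 / Real.Gamma ((n - m) / 2)) *
          ∫ w in Set.Ioi (0:ℝ),
            (x + 2 * t * w) ^ (1 - n / 2) * w ^ ((n - m) / 2 - 1) * Real.exp (-w)
      else
        (1 / Real.Gamma ((n - m) / 2)) *
          ∫ w in Set.Ioi (0:ℝ),
            -Real.log (x + 2 * t * w) * w ^ (-m / 2) * Real.exp (-w)) :
    ∀ t x : ℝ, 0 < t → 0 < x →
      deriv (fun s => f s x) t + m * deriv (fun y => f t y) x +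
        2 * x * deriv (deriv (fun y => f t y)) x = 0 := by
  intro t x ht hx
  change besqBackwardOperator m f t x = 0
  by_cases hn2 : 2 < n
  · have hfG : ∀ s y, 0 < s → 0 < y → f s y = 1 / Gamma ((n - m) / 2) *
        affineIntegral (fun u => u ^ (1 - n / 2)) (gammaWeight ((n - m) / 2 - 1)) s y := by
      intro s y hs hy
      simp only [hf s y hs hy, if_pos hn2, affineIntegral, gammaWeight, mul_assoc]
    rw [besqBackwardOperator_of_eqOn_const_mul hfG ht hx,
      besqBackwardOperator_affineIntegral_gammaWeight (c := 1 - n / 2) (r := 1 - n / 2 - 1)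
        (fun u hu => hasDerivAt_rpow_const (Or.inl hu.ne')) (by fun_prop) (by linarith)
        (by linarith) (by ring) ht hx, mul_zero]
  · have hfG : ∀ s y, 0 < s → 0 < y → f s y = 1 / Gamma ((n - m) / 2) *
        affineIntegral (fun u => -log u) (gammaWeight (-m / 2)) s y := by
      intro s y hs hy
      simp only [hf s y hs hy, if_neg hn2, affineIntegral, gammaWeight, mul_assoc]
    rw [besqBackwardOperator_of_eqOn_const_mul hfG ht hx,
      besqBackwardOperator_affineIntegral_gammaWeight (c := -1) (r := -1)
        (fun u hu => by rw [rpow_neg_one, neg_one_mul]; exact (hasDerivAt_log hu.ne').neg)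
        (by fun_prop) (by norm_num) (by linarith) (by ring) ht hx, mul_zero]

theorem f_satisfies_pde (n m : ℝ) (hn : 2 ≤ n) (hm0 : 0 ≤ m) (hmn : m < n)
    (f : ℝ → ℝ → ℝ)
    (hf : ∀ t x : ℝ, 0 < t → 0 < x → f t x =
      if 2 < n then
        (1 / Real.Gamma ((n - m) / 2)) *
          ∫ w in Set.Ioi (0:ℝ),
            (x + 2 * t * w) ^ (1 - n / 2) * w ^ ((n - m) / 2 - 1) * Real.exp (-w)
      else
        (1 / Real.Gamma ((n - m) / 2)) *
          ∫ w in Set.Ioi (0:ℝ),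
            -Real.log (x + 2 * t * w) * w ^ (-m / 2) * Real.exp (-w)) :
    ∀ t x : ℝ, 0 < t → 0 < x →
      deriv (fun s => f s x) t + m * deriv (fun y => f t y) x +
        2 * x * deriv (deriv (fun y => f t y)) x = 0 :=
  f_satisfies_pde_general n m hmn f hf
end

section
/- Fix x > 0, n > 2, 0 < m < 2, β' = Γ(m/2)/Γ(1-m/2), and g(h,z) = (1/Γ(n/2-1)) z^(n/2-2) exp(-z - β'(z/(2x))^(1-m/2) h). Then lim_{h↓0} (1/h)(1 - ∫₀^∞ g(h,z) dz) = β · (1/(2x))^(1-m/2), where β = Γ(m/2)Γ((n-m)/2)/(Γ(n/2-1)Γ(1-m/2)). -/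
open MeasureTheory Real Filter

theorem g_integral_limit (n m x : ℝ) (hn : 2 < n) (hm0 : 0 < m) (hm2 : m < 2) (hx : 0 < x)
    (β' β : ℝ) (hβ' : β' = Real.Gamma (m / 2) / Real.Gamma (1 - m / 2))
    (hβ : β = Real.Gamma (m / 2) * Real.Gamma ((n - m) / 2) /
      (Real.Gamma (n / 2 - 1) * Real.Gamma (1 - m / 2)))
    (g : ℝ → ℝ → ℝ)
    (hg : ∀ h z : ℝ, g h z = (1 / Real.Gamma (n / 2 - 1)) * z ^ (n / 2 - 2) *
      Real.exp (-z - β' * (z / (2 * x)) ^ (1 - m / 2) * h)) :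
    Tendsto (fun h : ℝ => (1 / h) * (1 - ∫ z in Set.Ioi (0:ℝ), g h z))
      (nhdsWithin 0 (Set.Ioi 0)) (nhds (β * (1 / (2 * x)) ^ (1 - m / 2))) := by
  have h2 : (0:ℝ) < n / 2 - 1 := by linarith
  have hΓ1 : 0 < Real.Gamma (n / 2 - 1) := Real.Gamma_pos_of_pos h2
  have hppos : (0:ℝ) < 1 - m / 2 := by linarith
  have hΓp : 0 < Real.Gamma (1 - m / 2) := Real.Gamma_pos_of_pos hppos
  have hΓm : 0 < Real.Gamma (m / 2) := Real.Gamma_pos_of_pos (by linarith)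
  have hβ'pos : 0 < β' := by rw [hβ']; exact div_pos hΓm hΓp
  have h2x : (0:ℝ) < 2 * x := by linarith
  set p : ℝ := 1 - m / 2 with hpdef
  set Γ1 : ℝ := Real.Gamma (n / 2 - 1) with hΓdef
  set A : ℝ → ℝ := fun z => (1 / Γ1) * z ^ (n / 2 - 2) * Real.exp (-z) with hA
  set c : ℝ → ℝ := fun z => β' * (z / (2 * x)) ^ p with hc
  have hg' : ∀ h z : ℝ, g h z = A z * Real.exp (-(c z * h)) := by
    intro h z
    simp only [hg, hA, hc]
    rw [show -z - β' * (z / (2 * x)) ^ p * h = -z + -(β' * (z / (2 * x)) ^ p * h) from by ring,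
      Real.exp_add]
    ring
  have hmeasg : ∀ h : ℝ, Measurable (g h) := by
    intro h
    have : g h = fun z => (1 / Γ1) * z ^ (n / 2 - 2) *
        Real.exp (-z - β' * (z / (2 * x)) ^ p * h) := funext fun z => hg h z
    rw [this]
    fun_prop
  have hmeasA : Measurable A := by rw [hA]; fun_prop
  have hmeasc : Measurable c := by rw [hc]; fun_prop
  have hAnn : ∀ z : ℝ, 0 < z → 0 ≤ A z := by
    intro z hz
    rw [hA]
    exact mul_nonneg (mul_nonneg (by positivity) (Real.rpow_nonneg hz.le _))
      (Real.exp_pos _).le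
  have hcnn : ∀ z : ℝ, 0 < z → 0 ≤ c z := by
    intro z hz
    rw [hc]
    exact mul_nonneg hβ'pos.le (Real.rpow_nonneg (by positivity) _)
  -- integrability of A
  have hIA : IntegrableOn A (Set.Ioi 0) := by
    have hbase := (Real.GammaIntegral_convergent h2).const_mul (1 / Γ1)
    apply IntegrableOn.congr_fun hbase ?_ measurableSet_Ioi
    intro z hz
    simp only [hA]
    rw [show n / 2 - 1 - 1 = n / 2 - 2 by ring]
    ring
  -- c on Ioi
  have hcz : ∀ z ∈ Set.Ioi (0:ℝ), c z = β' * (2 * x)⁻¹ ^ p * z ^ p := by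
    intro z hz
    simp only [hc]
    rw [div_eq_mul_inv, Real.mul_rpow (le_of_lt hz) (by positivity)]
    ring
  have hs : (0:ℝ) < (n - m) / 2 := by linarith
  -- integrability of A * c
  have hIF : IntegrableOn (fun z => A z * c z) (Set.Ioi 0) := by
    have hbase := (Real.GammaIntegral_convergent hs).const_mul
      ((1 / Γ1) * (β' * (2 * x)⁻¹ ^ p))
    apply IntegrableOn.congr_fun hbase ?_ measurableSet_Ioi
    intro z hz
    beta_reduce
    rw [hcz z hz]
    simp only [hA]
    rw [show (n - m) / 2 - 1 = (n / 2 - 2) + p by rw [hpdef]; ring, Real.rpow_add hz]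
    ring
  -- integrability of g h for h ≥ 0
  have hIg : ∀ h : ℝ, 0 ≤ h → IntegrableOn (g h) (Set.Ioi 0) := by
    intro h hh
    apply Integrable.mono hIA ((hmeasg h).aestronglyMeasurable)
    refine (ae_restrict_iff' measurableSet_Ioi).2 (Filter.Eventually.of_forall fun z hz => ?_)
    have h1 : Real.exp (-(c z * h)) ≤ 1 :=
      Real.exp_le_one_iff.2 (by nlinarith [hcnn z hz])
    rw [hg' h z, Real.norm_eq_abs, Real.norm_eq_abs,
      abs_of_nonneg (mul_nonneg (hAnn z hz) (Real.exp_pos _).le),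
      abs_of_nonneg (hAnn z hz)]
    nlinarith [hAnn z hz, Real.exp_pos (-(c z * h))]
  -- integral of g 0 is 1
  have hg0 : ∀ z : ℝ, g 0 z = A z := by
    intro z; rw [hg' 0 z]; simp
  have hint_g0 : (∫ z in Set.Ioi (0:ℝ), g 0 z) = 1 := by
    have e1 : (∫ z in Set.Ioi (0:ℝ), g 0 z)
        = ∫ z in Set.Ioi (0:ℝ), (1 / Γ1) * (Real.exp (-z) * z ^ (n / 2 - 1 - 1)) := by
      refine setIntegral_congr_fun measurableSet_Ioi fun z hz => ?_
      rw [hg0]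
      simp only [hA]
      rw [show n / 2 - 1 - 1 = n / 2 - 2 by ring]
      ring
    rw [e1, MeasureTheory.integral_const_mul, ← Real.Gamma_eq_integral h2, ← hΓdef]
    field_simp
  -- main dominated convergence
  have key : Tendsto (fun h : ℝ => ∫ z in Set.Ioi (0:ℝ), (1 / h) * (g 0 z - g h z))
      (nhdsWithin 0 (Set.Ioi 0)) (nhds (∫ z in Set.Ioi (0:ℝ), A z * c z)) := by
    apply tendsto_integral_filter_of_dominated_convergence (fun z => A z * c z)
    · filter_upwards with h
      exact (((hmeasg 0).sub (hmeasg h)).const_mul (1 / h)).aestronglyMeasurable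
    · filter_upwards [self_mem_nhdsWithin] with h hh
      refine (ae_restrict_iff' measurableSet_Ioi).2 (Filter.Eventually.of_forall fun z hz => ?_)
      have hh' : (0:ℝ) < h := hh
      have hd := hcnn z hz
      have hAz := hAnn z hz
      have e1 : g 0 z - g h z = A z * (1 - Real.exp (-(c z * h))) := by
        rw [hg' 0 z, hg' h z]; simp; ring
      have h1 : 0 ≤ 1 - Real.exp (-(c z * h)) := by
        have : Real.exp (-(c z * h)) ≤ 1 := Real.exp_le_one_iff.2 (by nlinarith)
        linarith
      have h2b : 1 - Real.exp (-(c z * h)) ≤ c z * h := by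
        have := Real.add_one_le_exp (-(c z * h)); linarith
      rw [e1, Real.norm_eq_abs,
        abs_of_nonneg (mul_nonneg (by positivity) (mul_nonneg hAz h1))]
      calc (1 / h) * (A z * (1 - Real.exp (-(c z * h))))
          ≤ (1 / h) * (A z * (c z * h)) := by
            apply mul_le_mul_of_nonneg_left
              (mul_le_mul_of_nonneg_left h2b hAz) (by positivity)
        _ = A z * c z := by field_simp
    · exact hIF
    · refine (ae_restrict_iff' measurableSet_Ioi).2 (Filter.Eventually.of_forall fun z hz => ?_)
      have hder : HasDerivAt (fun h : ℝ => Real.exp (-(c z * h))) (-(c z)) 0 := by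
        simpa using (((hasDerivAt_id (0:ℝ)).const_mul (c z)).neg).exp
      have hslope := hasDerivAt_iff_tendsto_slope.1 hder
      have hmono : nhdsWithin (0:ℝ) (Set.Ioi 0) ≤ nhdsWithin 0 {(0:ℝ)}ᶜ :=
        nhdsWithin_mono 0 (fun y hy => ne_of_gt hy)
      have h3 := ((hslope.mono_left hmono).neg.const_mul (A z))
      have h4 : A z * - -(c z) = A z * c z := by ring
      rw [h4] at h3
      refine Tendsto.congr' ?_ h3
      filter_upwards [self_mem_nhdsWithin] with h hh
      have hh0 : h ≠ 0 := ne_of_gt hh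
      rw [slope_def_field, hg' 0 z, hg' h z]
      simp only [mul_zero, neg_zero, Real.exp_zero, mul_one, sub_zero]
      field_simp
      ring
  -- value of the limit integral
  have hval : (∫ z in Set.Ioi (0:ℝ), A z * c z) = β * (1 / (2 * x)) ^ p := by
    have e1 : (∫ z in Set.Ioi (0:ℝ), A z * c z)
        = ∫ z in Set.Ioi (0:ℝ), ((1 / Γ1) * (β' * (2 * x)⁻¹ ^ p)) *
            (Real.exp (-z) * z ^ ((n - m) / 2 - 1)) := by
      refine setIntegral_congr_fun measurableSet_Ioi fun z hz => ?_
      rw [hcz z hz]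
      simp only [hA]
      rw [show (n - m) / 2 - 1 = (n / 2 - 2) + p by rw [hpdef]; ring, Real.rpow_add hz]
      ring
    rw [e1, MeasureTheory.integral_const_mul, ← Real.Gamma_eq_integral hs,
      hβ, hβ', one_div (2 * x)]
    field_simp
  rw [← hval]
  apply key.congr'
  filter_upwards [self_mem_nhdsWithin] with h hh
  rw [MeasureTheory.integral_const_mul,
    integral_sub (hIg 0 le_rfl) (hIg h (le_of_lt hh)), hint_g0]
end
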